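/- If A ∈ sp(V, Ω) satisfies A² = −I, then Aut(V, θ^A) = Sp(V, Ω)^A: every smooth diffeomorphism g: V → V satisfying Ω(g(z) − A(g(z)), Dg_z(v)) = Ω(z − Az, v) for all z, v ∈ V is a linear symplectic automorphism that commutes with A, and conversely every element of Sp(V, Ω) commuting with A preserves θ^A. -/

import Mathlib

/-!
Differentiating `g^* θ^A = θ^A` and using `dθ^A = Ω` shows that every `Dg_z` is symplectic, hence
invertible, and then `g^* θ^A = θ^A` says that `g` maps the vector field `z ↦ z - A z` to itself.
So `g` commutes with its flow `exp (t (1 - A)) = e^t (cos t - sin t • A)`. At `t = -2πn` the flow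
is the homothety by `e^{-2πn} → 0`, and homogeneity along these scalars together with
differentiability at `0` forces `g = Dg_0`. The flow at `t = π/2` is `-e^{π/2} A`, so `g`
commutes with `A`.
-/

open Real Filter Topology

theorem eq_fderiv_of_smul_eq {E F : Type*} [NormedAddCommGroup E] [NormedSpace ℝ E]
    [NormedAddCommGroup F] [NormedSpace ℝ F] {g : E → F} (hg : DifferentiableAt ℝ g 0)
    {c : ℕ → ℝ} (hc : Tendsto c atTop (𝓝[≠] 0)) (hgc : ∀ n z, g (c n • z) = c n • g z) (z : E) :
    g z = fderiv ℝ g 0 z := by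
  have hg0 : g 0 = 0 := by
    have hlim : Tendsto (fun n => c n • g 0) atTop (𝓝 ((0 : ℝ) • g 0)) :=
      (tendsto_nhds_of_tendsto_nhdsWithin hc).smul_const _
    rw [zero_smul] at hlim
    exact tendsto_nhds_unique (tendsto_const_nhds.congr fun n => by simpa using hgc n 0) hlim
  have hline : HasDerivAt (fun t : ℝ => g (t • z)) (fderiv ℝ g 0 z) 0 := by
    simpa [Function.comp_def] using hg.hasFDerivAt.comp_hasDerivAt_of_eq (0 : ℝ)
      ((hasDerivAt_id (0 : ℝ)).smul_const z) (by simp)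
  have hslope := hline.tendsto_slope_zero.comp hc
  refine tendsto_nhds_unique' atTop_neBot ?_ hslope
  refine tendsto_const_nhds.congr' ?_
  filter_upwards [(tendsto_nhdsWithin_iff.mp hc).2] with n hn
  simp [hgc, hg0, smul_smul, inv_mul_cancel₀ (show c n ≠ 0 from hn)]

theorem tendsto_exp_neg_nat_mul_two_pi :
    Tendsto (fun n : ℕ => exp (-(n * (2 * π)))) atTop (𝓝[≠] 0) := by
  refine tendsto_nhdsWithin_iff.mpr ⟨?_, .of_forall fun n => (exp_pos _).ne'⟩
  exact tendsto_exp_neg_atTop_nhds_zero.comp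
    (tendsto_natCast_atTop_atTop.atTop_mul_const two_pi_pos)

section Spiral

variable {V : Type*} [NormedAddCommGroup V] [NormedSpace ℝ V]

/-- `spiral A t = exp (t (1 - A))` when `A² = -1`. -/
noncomputable def spiral (A : V →ₗ[ℝ] V) (t : ℝ) (x : V) : V :=
  exp t • (cos t • x - sin t • A x)

variable {A : V →ₗ[ℝ] V}

theorem hasDerivAt_spiral (hA2 : ∀ x, A (A x) = -x) (x : V) (t : ℝ) :
    HasDerivAt (fun t => spiral A t x) (spiral A t x - A (spiral A t x)) t := by
  have h : HasDerivAt (fun t => exp t • (cos t • x - sin t • A x)) _ t := (hasDerivAt_exp t).smul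
    (((hasDerivAt_cos t).smul_const x).sub ((hasDerivAt_sin t).smul_const (A x)))
  refine h.congr_deriv ?_
  simp only [spiral, map_smul, map_sub, hA2]
  module

theorem spiral_zero (x : V) : spiral A 0 x = x := by simp [spiral]

theorem spiral_neg_nat_mul_two_pi (n : ℕ) (x : V) :
    spiral A (-(n * (2 * π))) x = exp (-(n * (2 * π))) • x := by
  simp [spiral, sin_periodic.nat_mul_eq n]

theorem spiral_pi_div_two (x : V) : spiral A (π / 2) x = -(exp (π / 2) • A x) := by
  simp [spiral]

end Spiral


section Bilinear

variable {V : Type*} [AddCommGroup V] [Module ℝ V] {Ω : V →ₗ[ℝ] V →ₗ[ℝ] ℝ} {A : V →ₗ[ℝ] V}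

/-- In other words `dθ^A = Ω`. -/
theorem sub_apply_sub_swap_eq_two_mul (hΩ : Ω.IsAlt) (hA : ∀ x y, Ω (A x) y + Ω x (A y) = 0)
    (x y : V) : Ω (x - A x) y - Ω (y - A y) x = 2 * Ω x y := by
  have h₁ := hΩ.neg x y
  have h₂ := hΩ.neg (A x) y
  have h₃ := hA y x
  simp only [map_sub, LinearMap.sub_apply]
  linarith

theorem injective_of_apply_apply_eq (hΩnd : Ω.SeparatingLeft) {L : V →ₗ[ℝ] V}
    (hL : ∀ u v, Ω (L u) (L v) = Ω u v) : Function.Injective L :=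
  (injective_iff_map_eq_zero L).mpr fun u hu =>
    hΩnd u fun v => by rw [← hL, hu, map_zero, LinearMap.zero_apply]

end Bilinear

section Liouville

variable {V : Type*} [NormedAddCommGroup V] [NormedSpace ℝ V]
  {Ω : V →ₗ[ℝ] V →ₗ[ℝ] ℝ} {A : V →ₗ[ℝ] V} {g : V → V}

variable (Ω A) in
/-- The pullback condition `g^* θ^A = θ^A`, using `θ^A_z = ½ Ω (z - A z, ·)`. -/
def PreservesLiouville (g : V → V) : Prop :=
  ∀ z v, Ω (g z - A (g z)) (fderiv ℝ g z v) = Ω (z - A z) v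

theorem PreservesLiouville.fderiv_symplectic [FiniteDimensional ℝ V] (hΩ : Ω.IsAlt)
    (hA : ∀ x y, Ω (A x) y + Ω x (A y) = 0) (hg : ContDiff ℝ 2 g) (H : PreservesLiouville Ω A g)
    (z u v : V) : Ω (fderiv ℝ g z u) (fderiv ℝ g z v) = Ω u v := by
  let Ωc : V →L[ℝ] V →L[ℝ] ℝ :=
    LinearMap.toContinuousLinearMap (LinearMap.toContinuousLinearMap.toLinearMap ∘ₗ Ω)
  let B : V →L[ℝ] V := LinearMap.toContinuousLinearMap (LinearMap.id - A)
  have hDg : ∀ y, HasFDerivAt g (fderiv ℝ g y) y := fun y =>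
    (hg.differentiable (by norm_num) y).hasFDerivAt
  have hD2 : HasFDerivAt (fderiv ℝ g) (fderiv ℝ (fderiv ℝ g) z) z :=
    ((hg.fderiv_right (m := 1) (by norm_num)).differentiable one_ne_zero z).hasFDerivAt
  have hdiff : ∀ u v, Ω (g z - A (g z)) (fderiv ℝ (fderiv ℝ g) z u v)
      + Ω (fderiv ℝ g z u - A (fderiv ℝ g z u)) (fderiv ℝ g z v) = Ω (u - A u) v := by
    intro u v
    have hL := ((Ωc.comp B).hasFDerivAt.comp z (hDg z)).clm_apply
      (hD2.clm_apply (hasFDerivAt_const v z))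
    have hH : (fun y => (Ωc.comp B ∘ g) y (fderiv ℝ g y v)) = (Ωc.flip v).comp B :=
      funext fun y => H y v
    rw [hH] at hL
    simpa [Ωc, B] using congr($(hL.unique ((Ωc.flip v).comp B).hasFDerivAt) u)
  have hsymm := second_derivative_symmetric hDg hD2 u v
  have h₁ := hdiff u v
  have h₂ := hdiff v u
  have h₃ := sub_apply_sub_swap_eq_two_mul hΩ hA (fderiv ℝ g z u) (fderiv ℝ g z v)
  have h₄ := sub_apply_sub_swap_eq_two_mul hΩ hA u v
  rw [hsymm] at h₁
  linarith

theorem PreservesLiouville.fderiv_apply_sub [FiniteDimensional ℝ V] (hΩnd : Ω.SeparatingLeft)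
    (H : PreservesLiouville Ω A g) {y : V}
    (hsymp : ∀ u v, Ω (fderiv ℝ g y u) (fderiv ℝ g y v) = Ω u v) :
    fderiv ℝ g y (y - A y) = g y - A (g y) := by
  have hsurj : Function.Surjective (fderiv ℝ g y) :=
    LinearMap.injective_iff_surjective.mp (injective_of_apply_apply_eq hΩnd hsymp)
  refine (sub_eq_zero.mp (hΩnd _ fun w => ?_)).symm
  obtain ⟨v, rfl⟩ := hsurj w
  rw [map_sub, LinearMap.sub_apply, H, hsymp, sub_self]

theorem apply_spiral_of_fderiv_apply_sub [FiniteDimensional ℝ V] (hA2 : ∀ x, A (A x) = -x)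
    (hg : Differentiable ℝ g) (hflow : ∀ y, fderiv ℝ g y (y - A y) = g y - A (g y))
    (t : ℝ) (z : V) : g (spiral A t z) = spiral A t (g z) := by
  let B : V →L[ℝ] V := LinearMap.toContinuousLinearMap (LinearMap.id - A)
  have hsol : ∀ x t, HasDerivAt (fun t => spiral A t x) (B (spiral A t x)) t :=
    hasDerivAt_spiral hA2
  have hgsol : ∀ t, HasDerivAt (fun t => g (spiral A t z)) (B (g (spiral A t z))) t := fun t => by
    simpa [B, hflow, Function.comp_def] using (hg _).hasFDerivAt.comp_hasDerivAt t (hsol z t)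
  have := ODE_solution_unique_univ (v := fun _ => B) (s := fun _ => Set.univ) (t₀ := 0)
    (fun _ => B.lipschitz.lipschitzOnWith) (fun t => ⟨hgsol t, trivial⟩)
    (fun t => ⟨hsol (g z) t, trivial⟩) (by simp [spiral_zero])
  exact congr_fun this t

theorem preservesLiouville_of_isLinearMap [FiniteDimensional ℝ V] (hlin : IsLinearMap ℝ g)
    (hsymp : ∀ x y, Ω (g x) (g y) = Ω x y) (hcomm : ∀ z, g (A z) = A (g z)) :
    PreservesLiouville Ω A g := by
  let G : V →L[ℝ] V := LinearMap.toContinuousLinearMap (hlin.mk' g)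
  intro z v
  rw [show fderiv ℝ g z = G from G.fderiv]
  change Ω (g z - A (g z)) (g v) = Ω (z - A z) v
  rw [← hcomm, map_sub, map_sub, LinearMap.sub_apply, LinearMap.sub_apply, hsymp, hsymp]

end Liouville

theorem stmt_8_general {V : Type*} [NormedAddCommGroup V] [NormedSpace ℝ V] [FiniteDimensional ℝ V]
    (Ω : V →ₗ[ℝ] V →ₗ[ℝ] ℝ)
    (hΩalt : ∀ x : V, Ω x x = 0)
    (hΩnd : ∀ x : V, (∀ y : V, Ω x y = 0) → x = 0)
    (A : V →ₗ[ℝ] V) (hA : ∀ x y : V, Ω (A x) y + Ω x (A y) = 0)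
    (hA2 : A ∘ₗ A = -LinearMap.id)
    (g : V → V) (hg : ContDiff ℝ (⊤ : ℕ∞) g) :
    (∀ z v : V, Ω (g z - A (g z)) (fderiv ℝ g z v) = Ω (z - A z) v) ↔
      (IsLinearMap ℝ g ∧ (∀ x y : V, Ω (g x) (g y) = Ω x y) ∧
        ∀ z : V, g (A z) = A (g z)) := by
  have hA2' : ∀ x, A (A x) = -x := fun x => by simpa using LinearMap.congr_fun hA2 x
  have hgdiff : Differentiable ℝ g := hg.differentiable (by simp)
  refine ⟨fun (H : PreservesLiouville Ω A g) => ?_,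
    fun ⟨hlin, hsymp, hcomm⟩ => preservesLiouville_of_isLinearMap hlin hsymp hcomm⟩
  have hsymp := H.fderiv_symplectic hΩalt hA (hg.of_le (WithTop.coe_le_coe.mpr le_top))
  have hspiral := apply_spiral_of_fderiv_apply_sub hA2' hgdiff fun y =>
    H.fderiv_apply_sub hΩnd (hsymp y)
  have hL : ∀ z, g z = fderiv ℝ g 0 z :=
    eq_fderiv_of_smul_eq (hgdiff 0) tendsto_exp_neg_nat_mul_two_pi fun n z => by
      simpa only [spiral_neg_nat_mul_two_pi] using hspiral (-(n * (2 * π))) z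
  have hlin : IsLinearMap ℝ g := by
    rw [funext hL]
    exact (fderiv ℝ g 0).toLinearMap.isLinear
  refine ⟨hlin, fun x y => by simpa only [← hL] using hsymp 0 x y, fun z => ?_⟩
  have h := hspiral (π / 2) z
  rw [spiral_pi_div_two, spiral_pi_div_two, hlin.map_neg, hlin.map_smul, neg_inj] at h
  exact smul_right_injective V (exp_pos _).ne' h

/-- If `A ∈ sp(V, Ω)` satisfies `A² = −I`, then `Aut(V, θ^A) = Sp(V, Ω)^A`:
a smooth diffeomorphism `g : V → V` satisfies `Ω(g(z) − A(g(z)), Dg_z(v)) = Ω(z − Az, v)`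
for all `z, v` if and only if `g` is a linear symplectic automorphism commuting with `A`. -/
theorem stmt_8 {V : Type*} [NormedAddCommGroup V] [NormedSpace ℝ V] [FiniteDimensional ℝ V]
    (Ω : V →ₗ[ℝ] V →ₗ[ℝ] ℝ)
    (hΩalt : ∀ x : V, Ω x x = 0)
    (hΩnd : ∀ x : V, (∀ y : V, Ω x y = 0) → x = 0)
    (A : V →ₗ[ℝ] V) (hA : ∀ x y : V, Ω (A x) y + Ω x (A y) = 0)
    (hA2 : A ∘ₗ A = -LinearMap.id)
    (g ginv : V → V) (hg : ContDiff ℝ (⊤ : ℕ∞) g) (hginv : ContDiff ℝ (⊤ : ℕ∞) ginv)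
    (hli : Function.LeftInverse ginv g) (hri : Function.RightInverse ginv g) :
    (∀ z v : V, Ω (g z - A (g z)) (fderiv ℝ g z v) = Ω (z - A z) v) ↔
      (IsLinearMap ℝ g ∧ (∀ x y : V, Ω (g x) (g y) = Ω x y) ∧
        ∀ z : V, g (A z) = A (g z)) :=
  stmt_8_general Ω hΩalt hΩnd A hA hA2 g hg
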